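/- arXiv:2308.08774 — 3 statements merged into one kernel-verified Lean document; each statement's English description precedes it below -/
import Mathlib

section
/- Let p, p_d, p_2, ε_p, ε_i be real numbers with 0 < p_d. If p ≤ exp(ε_p) · p_d (the ε_p-differential-privacy condition) and p − p_d > exp(ε_i) · (p − p_2) (the ε_i-instance-interpretability condition), then exp(ε_p) > exp(ε_i) · (p − p_2) / p_d + 1. -/
theorem dp_interp_tradeoff (p p_d p_2 ε_p ε_i : ℝ) (hpd : 0 < p_d)
    (hdp : p ≤ Real.exp ε_p * p_d)
    (hint : p - p_d > Real.exp ε_i * (p - p_2)) :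
    Real.exp ε_p > Real.exp ε_i * (p - p_2) / p_d + 1 := by
  have hgap : Real.exp ε_i * (p - p_2) < (Real.exp ε_p - 1) * p_d := by linarith
  rw [gt_iff_lt, ← lt_sub_iff_add_lt, div_lt_iff₀ hpd]
  exact hgap
end

section
/- Let p, p_d, p_2, ε_p, ε_i be real numbers with 0 < p_d and p_2 < p. If p ≤ exp(ε_p) · p_d (the ε_p-differential-privacy condition) and p − p_d > exp(ε_i) · (p − p_2) (the ε_i-instance-interpretability condition), then ε_p > log(1 + exp(ε_i) · (p − p_2) / p_d), and in particular ε_p > 0. -/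
open Real

lemma one_add_div_lt_of_add_lt_mul {q a c : ℝ} (hq : 0 < q) (h : q + a < c * q) :
    1 + a / q < c := by
  rwa [one_add_div hq.ne', div_lt_iff₀ hq]

theorem dp_lower_bound (p p_d p_2 ε_p ε_i : ℝ) (hpd : 0 < p_d) (hp2 : p_2 < p)
    (hdp : p ≤ Real.exp ε_p * p_d)
    (hint : p - p_d > Real.exp ε_i * (p - p_2)) :
    ε_p > Real.log (1 + Real.exp ε_i * (p - p_2) / p_d) ∧ ε_p > 0 := by
  set δ := exp ε_i * (p - p_2)
  have hδ : 0 < δ / p_d := div_pos (mul_pos (exp_pos _) (sub_pos.2 hp2)) hpd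
  have hlt_exp : 1 + δ / p_d < exp ε_p :=
    one_add_div_lt_of_add_lt_mul hpd (by linarith)
  have hlog : log (1 + δ / p_d) < ε_p := (log_lt_iff_lt_exp (by linarith)).2 hlt_exp
  exact ⟨hlog, (log_pos (by linarith)).trans hlog⟩
end

section
/- Let p, p_d, p_2, ε_p, ε_i be real numbers with 0 < p_d and p_2 < p. If p ≤ exp(ε_p) · p_d and p − p_d > exp(ε_i) · (p − p_2), then ε_i < log((exp(ε_p) − 1) · p_d / (p − p_2)). -/
theorem interp_upper_bound_general (p p_d p_2 ε_p ε_i : ℝ) (hp2 : p_2 < p)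
    (hdp : p ≤ Real.exp ε_p * p_d)
    (hint : p - p_d > Real.exp ε_i * (p - p_2)) :
    ε_i < Real.log ((Real.exp ε_p - 1) * p_d / (p - p_2)) := by
  have hgap : 0 < p - p_2 := sub_pos.mpr hp2
  -- privacy caps the margin `p - p_d` by `(exp ε_p - 1) * p_d`
  have hmargin : Real.exp ε_i * (p - p_2) < (Real.exp ε_p - 1) * p_d := by linarith
  have hexp : Real.exp ε_i < (Real.exp ε_p - 1) * p_d / (p - p_2) :=
    (lt_div_iff₀ hgap).mpr hmargin
  exact (Real.lt_log_iff_exp_lt ((Real.exp_pos ε_i).trans hexp)).mpr hexp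

theorem interp_upper_bound (p p_d p_2 ε_p ε_i : ℝ) (hpd : 0 < p_d) (hp2 : p_2 < p)
    (hdp : p ≤ Real.exp ε_p * p_d)
    (hint : p - p_d > Real.exp ε_i * (p - p_2)) :
    ε_i < Real.log ((Real.exp ε_p - 1) * p_d / (p - p_2)) :=
  interp_upper_bound_general p p_d p_2 ε_p ε_i hp2 hdp hint
end
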